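/- Let φ be the Peskin four-point kernel. For every r ∈ [0, 1], φ(r − 2)² + φ(r − 1)² + φ(r)² + φ(r + 1)² = 3/8. -/

import Mathlib

/-!
For `r ∈ [0, 1]` the four arguments `r - 2, r - 1, r, r + 1` fall in the four pieces of the kernel,
and all four radicands equal `1 + 4r - 4r²`. With `u` its square root, the values are
`(1 + 2r ∓ u)/8` and `(3 - 2r ± u)/8`, so the `±u` cross terms cancel and the sum of squares is
`(2(1 + 2r)² + 2(3 - 2r)² + 4u²)/64 = 24/64`.
-/

noncomputable def peskinPhi (r : ℝ) : ℝ :=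
  if |r| ≤ 1 then (3 - 2 * |r| + Real.sqrt (1 + 4 * |r| - 4 * r ^ 2)) / 8
  else if |r| ≤ 2 then (5 - 2 * |r| - Real.sqrt (-7 + 12 * |r| - 4 * r ^ 2)) / 8
  else 0

theorem peskinPhi_neg (r : ℝ) : peskinPhi (-r) = peskinPhi r := by
  simp only [peskinPhi, abs_neg, neg_sq]

theorem peskinPhi_of_nonneg_of_le_one {r : ℝ} (h0 : 0 ≤ r) (h1 : r ≤ 1) :
    peskinPhi r = (3 - 2 * r + Real.sqrt (1 + 4 * r - 4 * r ^ 2)) / 8 := by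
  rw [peskinPhi, abs_of_nonneg h0, if_pos h1]

theorem peskinPhi_of_one_le_of_le_two {r : ℝ} (h1 : 1 ≤ r) (h2 : r ≤ 2) :
    peskinPhi r = (5 - 2 * r - Real.sqrt (-7 + 12 * r - 4 * r ^ 2)) / 8 := by
  rcases h1.eq_or_lt with rfl | h1
  · norm_num [peskinPhi]
  · rw [peskinPhi, abs_of_pos (by linarith), if_neg (by linarith), if_pos h2]

theorem peskinPhi_sub_one_of_nonneg_of_le_one {r : ℝ} (h0 : 0 ≤ r) (h1 : r ≤ 1) :
    peskinPhi (r - 1) = (1 + 2 * r + Real.sqrt (1 + 4 * r - 4 * r ^ 2)) / 8 := by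
  rw [← peskinPhi_neg, neg_sub, peskinPhi_of_nonneg_of_le_one (by linarith) (by linarith),
    show 1 + 4 * (1 - r) - 4 * (1 - r) ^ 2 = 1 + 4 * r - 4 * r ^ 2 by ring]
  ring

theorem peskinPhi_sub_two_of_nonneg_of_le_one {r : ℝ} (h0 : 0 ≤ r) (h1 : r ≤ 1) :
    peskinPhi (r - 2) = (1 + 2 * r - Real.sqrt (1 + 4 * r - 4 * r ^ 2)) / 8 := by
  rw [← peskinPhi_neg, neg_sub, peskinPhi_of_one_le_of_le_two (by linarith) (by linarith),
    show -7 + 12 * (2 - r) - 4 * (2 - r) ^ 2 = 1 + 4 * r - 4 * r ^ 2 by ring]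
  ring

theorem peskinPhi_add_one_of_nonneg_of_le_one {r : ℝ} (h0 : 0 ≤ r) (h1 : r ≤ 1) :
    peskinPhi (r + 1) = (3 - 2 * r - Real.sqrt (1 + 4 * r - 4 * r ^ 2)) / 8 := by
  rw [peskinPhi_of_one_le_of_le_two (by linarith) (by linarith),
    show -7 + 12 * (r + 1) - 4 * (r + 1) ^ 2 = 1 + 4 * r - 4 * r ^ 2 by ring]
  ring

theorem stmt_17 :
    ∀ r ∈ Set.Icc (0 : ℝ) 1,
      peskinPhi (r - 2) ^ 2 + peskinPhi (r - 1) ^ 2 + peskinPhi r ^ 2 +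
        peskinPhi (r + 1) ^ 2 = 3 / 8 := by
  rintro r ⟨h0, h1⟩
  have hu : Real.sqrt (1 + 4 * r - 4 * r ^ 2) ^ 2 = 1 + 4 * r - 4 * r ^ 2 :=
    Real.sq_sqrt (by nlinarith)
  rw [peskinPhi_sub_two_of_nonneg_of_le_one h0 h1, peskinPhi_sub_one_of_nonneg_of_le_one h0 h1,
    peskinPhi_of_nonneg_of_le_one h0 h1, peskinPhi_add_one_of_nonneg_of_le_one h0 h1]
  linear_combination hu / 16
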